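/- arXiv:cs/0605006 — 3 statements merged into one kernel-verified Lean document; each statement's English description precedes it below -/
import Mathlib

section
/- The spectral inf-mutual information rate is nonnegative: for any general sources X = {X_n} and Y = {Y_n} on finite alphabets, p-liminf_{n→∞} (1/n)·ln(P_{X_nY_n}(X_n,Y_n)/(P_{X_n}(X_n)·P_{Y_n}(Y_n))) ≥ 0. -/
open Filter

/-- Limit inferior in probability for random variables on finite alphabets. -/
noncomputable def pLimInfP {α : ℕ → Type} [∀ n, Fintype (α n)]
    (p : ∀ n, α n → ℝ) (Z : ∀ n, α n → ℝ) : EReal :=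
  sSup (Real.toEReal '' {a : ℝ |
    Tendsto (fun n => ∑ x : α n, if Z n x < a then p n x else 0) atTop (nhds 0)})

/-!
For `a < 0`, the event that the normalized log-likelihood ratio of `P_{XY}` against
`P_X × P_Y` falls below `a` has probability at most `exp (a n) · ∑ P_X P_Y = exp (a n)`:
on that event `P_{XY} ≤ exp (a n) · P_X P_Y`. Hence every negative `a` lies below the
p-liminf. The argument works for any dominating sub-probability `q` in place of `P_X × P_Y`.
-/

open Topology Real

section Marginals

variable {α β : Type*} [Fintype α] [Fintype β]

noncomputable def marginalProd (p : α × β → ℝ) (z : α × β) : ℝ :=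
  (∑ y, p (z.1, y)) * (∑ x, p (x, z.2))

theorem sum_marginalProd (p : α × β → ℝ) : ∑ z, marginalProd p z = (∑ z, p z) ^ 2 := by
  simp only [marginalProd, Fintype.sum_prod_type, ← Finset.sum_mul_sum, sq]
  rw [Finset.sum_comm (f := fun y x => p (x, y))]

theorem marginalProd_nonneg {p : α × β → ℝ} (hp : 0 ≤ p) : 0 ≤ marginalProd p := fun _ =>
  mul_nonneg (Finset.sum_nonneg fun _ _ => hp _) (Finset.sum_nonneg fun _ _ => hp _)

theorem eq_zero_of_marginalProd_eq_zero {p : α × β → ℝ} (hp : 0 ≤ p) {z : α × β}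
    (hz : marginalProd p z = 0) : p z = 0 := by
  obtain ⟨x, y⟩ := z
  have hfst : p (x, y) ≤ ∑ y', p (x, y') :=
    Finset.single_le_sum (f := fun y' => p (x, y')) (fun _ _ => hp _) (Finset.mem_univ y)
  have hsnd : p (x, y) ≤ ∑ x', p (x', y) :=
    Finset.single_le_sum (f := fun x' => p (x', y)) (fun _ _ => hp _) (Finset.mem_univ x)
  rcases mul_eq_zero.mp hz with h | h
  exacts [le_antisymm (h ▸ hfst) (hp _), le_antisymm (h ▸ hsnd) (hp _)]

end Marginals

theorem le_exp_mul_of_log_div_lt {a b t : ℝ} (ha : 0 ≤ a) (hb : 0 ≤ b) (hab : b = 0 → a = 0)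
    (h : log (a / b) < t) : a ≤ exp t * b := by
  rcases ha.eq_or_lt with rfl | ha
  · positivity
  have hb : 0 < b := hb.lt_of_ne fun hb => ha.ne' (hab hb.symm)
  rw [log_lt_iff_lt_exp (div_pos ha hb), div_lt_iff₀ hb] at h
  exact h.le

theorem sum_ite_log_div_lt_le {α : Type*} [Fintype α] {p q : α → ℝ} (hp : 0 ≤ p) (hq : 0 ≤ q)
    (hpq : ∀ z, q z = 0 → p z = 0) (t : ℝ) :
    ∑ z, (if log (p z / q z) < t then p z else 0) ≤ exp t * ∑ z, q z := by
  rw [Finset.mul_sum]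
  refine Finset.sum_le_sum fun z _ => ?_
  split_ifs with h
  · exact le_exp_mul_of_log_div_lt (hp z) (hq z) (hpq z) h
  · exact mul_nonneg (exp_pos t).le (hq z)

section Sequences

variable {α : ℕ → Type} [∀ n, Fintype (α n)] {p q : ∀ n, α n → ℝ}

theorem tendsto_sum_ite_log_div_lt (hp : ∀ n, 0 ≤ p n) (hq : ∀ n, 0 ≤ q n)
    (hpq : ∀ n z, q n z = 0 → p n z = 0) (hq1 : ∀ n, ∑ z, q n z ≤ 1) {a : ℝ} (ha : a < 0) :
    Tendsto (fun n : ℕ => ∑ z, if 1 / (n : ℝ) * log (p n z / q n z) < a then p n z else 0)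
      atTop (𝓝 0) := by
  have hexp : Tendsto (fun n : ℕ => exp (a * n)) atTop (𝓝 0) :=
    tendsto_exp_atBot.comp (tendsto_natCast_atTop_atTop.const_mul_atTop_of_neg ha)
  refine squeeze_zero' (Eventually.of_forall fun n => Finset.sum_nonneg fun z _ => ?_) ?_ hexp
  · split_ifs
    exacts [hp n z, le_rfl]
  filter_upwards [eventually_gt_atTop 0] with n hn
  have hn : (0 : ℝ) < n := Nat.cast_pos.mpr hn
  have hiff : ∀ z, 1 / (n : ℝ) * log (p n z / q n z) < a ↔ log (p n z / q n z) < a * n :=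
    fun z => by rw [one_div_mul_eq_div, div_lt_iff₀ hn]
  simp_rw [hiff]
  calc _ ≤ exp (a * n) * ∑ z, q n z := sum_ite_log_div_lt_le (hp n) (hq n) (hpq n) _
    _ ≤ exp (a * n) := mul_le_of_le_one_right (exp_pos _).le (hq1 n)

theorem coe_le_pLimInfP {Z : ∀ n, α n → ℝ} {c : ℝ}
    (h : ∀ a < c, Tendsto (fun n => ∑ z, if Z n z < a then p n z else 0) atTop (𝓝 0)) :
    (c : EReal) ≤ pLimInfP p Z :=
  EReal.ge_of_forall_gt_iff_ge.mp fun a ha => le_sSup ⟨a, h a (EReal.coe_lt_coe_iff.mp ha), rfl⟩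

theorem zero_le_pLimInfP_log_div (hp : ∀ n, 0 ≤ p n) (hq : ∀ n, 0 ≤ q n)
    (hpq : ∀ n z, q n z = 0 → p n z = 0) (hq1 : ∀ n, ∑ z, q n z ≤ 1) :
    (0 : EReal) ≤ pLimInfP p (fun n z => 1 / (n : ℝ) * log (p n z / q n z)) :=
  coe_le_pLimInfP fun _ ha => tendsto_sum_ite_log_div_lt hp hq hpq hq1 ha

end Sequences

/-- the spectral inf-mutual information rate is nonnegative. -/
theorem stmt_5 {X Y : ℕ → Type} [∀ n, Fintype (X n)] [∀ n, Fintype (Y n)]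
    (p : ∀ n, X n × Y n → ℝ)
    (hp0 : ∀ n z, 0 ≤ p n z) (hp1 : ∀ n, ∑ z, p n z = 1) :
    (0 : EReal) ≤ pLimInfP p (fun n z =>
      (1 / (n : ℝ)) * Real.log
        (p n z / ((∑ y : Y n, p n (z.1, y)) * (∑ x : X n, p n (x, z.2))))) :=
  zero_le_pLimInfP_log_div (q := fun n => marginalProd (p n)) (fun n => hp0 n)
    (fun n => marginalProd_nonneg (hp0 n))
    (fun n _ => eq_zero_of_marginalProd_eq_zero (hp0 n))
    (fun n => by rw [sum_marginalProd, hp1, one_pow])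
end

section
/- The generalized spectral inf-mutual information rate of a family is nonnegative: for any finite family of general sources (Z^{(m)})_{m∈A} on finite alphabets, p-liminf_{n→∞} (1/n)·ln(P_{(Z_n^{(m)})_{m∈A}}((Z_n^{(m)})_{m∈A}) / ∏_{m∈A} P_{Z_n^{(m)}}(Z_n^{(m)})) ≥ 0. -/
/-! Let `q n` be the product of the marginals of `p n`; it is again a probability distribution.
Wherever `(1/n) log (p/q) < a`, one has `p ≤ e^{na} q`, so the `p n`-mass of that event is at most
`e^{na}`, which tends to `0` when `a < 0`. Hence every negative `a` lies in the set whose supremum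
defines `pLimInfP`. -/

open Filter

theorem zero_le_pLimInfP_of_forall_neg {α : ℕ → Type} [∀ n, Fintype (α n)]
    (p : ∀ n, α n → ℝ) (Z : ∀ n, α n → ℝ)
    (h : ∀ a : ℝ, a < 0 →
      Tendsto (fun n => ∑ x : α n, if Z n x < a then p n x else 0) atTop (nhds 0)) :
    0 ≤ pLimInfP p Z := by
  by_contra! hneg
  obtain ⟨c, hc_lt, hc_neg⟩ := EReal.exists_between_coe_real hneg
  exact (le_sSup (Set.mem_image_of_mem _ (h c (EReal.coe_lt_coe_iff.mp hc_neg)))).not_gt hc_lt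

section Marginal

variable {ι : Type*} [Fintype ι] [DecidableEq ι] {Z : ι → Type*} [∀ m, Fintype (Z m)]
  [∀ m, DecidableEq (Z m)]

def marginal (p : (∀ m, Z m) → ℝ) (m : ι) (x : Z m) : ℝ :=
  ∑ t : ∀ m', Z m', if t m = x then p t else 0

theorem marginal_nonneg {p : (∀ m, Z m) → ℝ} (hp : ∀ t, 0 ≤ p t) (m : ι) (x : Z m) :
    0 ≤ marginal p m x :=
  Finset.sum_nonneg fun t _ => by split_ifs <;> simp [hp t]

theorem sum_marginal (p : (∀ m, Z m) → ℝ) (m : ι) : ∑ x, marginal p m x = ∑ t, p t := by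
  unfold marginal
  rw [Finset.sum_comm]
  simp

theorem sum_prod_marginal (p : (∀ m, Z m) → ℝ) :
    ∑ t : ∀ m, Z m, ∏ m, marginal p m (t m) = (∑ t, p t) ^ Fintype.card ι := by
  rw [← Fintype.prod_sum (fun m x => marginal p m x)]
  simp [sum_marginal]

end Marginal

theorem le_exp_mul_of_log_div_lt_s6 {x y c : ℝ} (hx : 0 ≤ x) (hy : 0 ≤ y) (hc : c ≤ 0)
    (h : Real.log (x / y) < c) : x ≤ Real.exp c * y := by
  rcases hx.eq_or_lt with rfl | hx
  · positivity
  rcases hy.eq_or_lt with rfl | hy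
  · -- junk values: `log (x / 0) = log 0 = 0`, which is not below `c ≤ 0`
    simp only [div_zero, Real.log_zero] at h
    linarith
  rw [Real.log_lt_iff_lt_exp (div_pos hx hy), div_lt_iff₀ hy] at h
  exact h.le

theorem sum_ite_log_div_lt_le_exp {α : Type*} [Fintype α] {p q : α → ℝ}
    (hp : ∀ x, 0 ≤ p x) (hq : ∀ x, 0 ≤ q x) (hq1 : ∑ x, q x = 1) {c : ℝ} (hc : c ≤ 0) :
    ∑ x, (if Real.log (p x / q x) < c then p x else 0) ≤ Real.exp c :=
  calc ∑ x, (if Real.log (p x / q x) < c then p x else 0)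
      ≤ ∑ x, Real.exp c * q x := Finset.sum_le_sum fun x _ => by
        split_ifs with h
        · exact le_exp_mul_of_log_div_lt_s6 (hp x) (hq x) hc h
        · exact mul_nonneg (Real.exp_pos c).le (hq x)
    _ = Real.exp c := by rw [← Finset.mul_sum, hq1, mul_one]

theorem tendsto_sum_ite_log_div_lt_of_neg {α : ℕ → Type*} [∀ n, Fintype (α n)]
    {p q : ∀ n, α n → ℝ} (hp : ∀ n x, 0 ≤ p n x) (hq : ∀ n x, 0 ≤ q n x)
    (hq1 : ∀ n, ∑ x, q n x = 1) {a : ℝ} (ha : a < 0) :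
    Tendsto (fun n => ∑ x : α n,
      if (1 / (n : ℝ)) * Real.log (p n x / q n x) < a then p n x else 0) atTop (nhds 0) := by
  have hexp : Tendsto (fun n : ℕ => Real.exp (n * a)) atTop (nhds 0) :=
    Real.tendsto_exp_atBot.comp (tendsto_natCast_atTop_atTop.atTop_mul_const_of_neg ha)
  refine squeeze_zero' (Eventually.of_forall fun n =>
    Finset.sum_nonneg fun x _ => by split_ifs <;> simp [hp n x]) ?_ hexp
  filter_upwards [eventually_gt_atTop 0] with n hn
  have hn : (0 : ℝ) < n := Nat.cast_pos.mpr hn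
  have hbound := sum_ite_log_div_lt_le_exp (hp n) (hq n) (hq1 n)
    (mul_nonpos_of_nonneg_of_nonpos hn.le ha.le)
  simpa only [one_div_mul_eq_div, div_lt_iff₀' hn] using hbound

/-- the generalized spectral inf-mutual information rate of a finite
family of general sources is nonnegative. The marginal of the `m`-th component is
`∑_{t' : t' m = t m} p n t'`. -/
theorem stmt_6 {ι : Type} [Fintype ι] [DecidableEq ι]
    {Z : ℕ → ι → Type} [∀ n m, Fintype (Z n m)] [∀ n m, DecidableEq (Z n m)]
    (p : ∀ n, (∀ m, Z n m) → ℝ)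
    (hp0 : ∀ n t, 0 ≤ p n t) (hp1 : ∀ n, ∑ t, p n t = 1) :
    (0 : EReal) ≤ pLimInfP p (fun n t =>
      (1 / (n : ℝ)) * Real.log
        (p n t / ∏ m, (∑ t' : ∀ m', Z n m', if t' m = t m then p n t' else 0))) := by
  have hq0 (n : ℕ) (t : ∀ m, Z n m) : 0 ≤ ∏ m, marginal (p n) m (t m) :=
    Finset.prod_nonneg fun m _ => marginal_nonneg (hp0 n) m (t m)
  have hq1 (n : ℕ) : ∑ t : ∀ m, Z n m, ∏ m, marginal (p n) m (t m) = 1 := by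
    rw [sum_prod_marginal, hp1, one_pow]
  exact zero_le_pLimInfP_of_forall_neg _ _ fun a ha =>
    tendsto_sum_ite_log_div_lt_of_neg hp0 hq0 hq1 ha
end

section
/- Mixture source bound for p-limsup: let P_{W_n} = α P_{W_n^α} + β P_{W_n^β} be a mixture of two distributions with constants α, β > 0, α + β = 1, and let g_n be real-valued functions on the common alphabet. Then p-limsup g_n(W_n) = max{ p-limsup g_n(W_n^α), p-limsup g_n(W_n^β) }. -/
open Filter

/-- Limit superior in probability for random variables on finite alphabets. -/
noncomputable def pLimSupP {α : ℕ → Type} [∀ n, Fintype (α n)]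
    (p : ∀ n, α n → ℝ) (Z : ∀ n, α n → ℝ) : EReal :=
  sInf (Real.toEReal '' {a : ℝ |
    Tendsto (fun n => ∑ x : α n, if a < Z n x then p n x else 0) atTop (nhds 0)})

open Topology

/-! A threshold `a` is admissible for the mixture iff the tail mass
`α Pr{g_n(W_n^α) > a} + β Pr{g_n(W_n^β) > a}` vanishes in the limit; since both weights are
positive, this happens iff `a` is admissible for both components. The admissible thresholds form
upper sets, and the infimum over an intersection of two upper sets is the larger of the two
infima. -/

theorem sInf_image_inter_eq_max_of_isUpperSet {α β : Type*} [LinearOrder α]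
    [CompleteLinearOrder β] {f : α → β} (hf : Monotone f) {A B : Set α}
    (hA : IsUpperSet A) (hB : IsUpperSet B) :
    sInf (f '' (A ∩ B)) = max (sInf (f '' A)) (sInf (f '' B)) := by
  refine le_antisymm (le_of_forall_gt fun c hc => ?_) ?_
  · rw [max_lt_iff] at hc
    obtain ⟨_, ⟨a, ha, rfl⟩, hac⟩ := sInf_lt_iff.mp hc.1
    obtain ⟨_, ⟨b, hb, rfl⟩, hbc⟩ := sInf_lt_iff.mp hc.2
    have hmem : max a b ∈ A ∩ B := ⟨hA (le_max_left a b) ha, hB (le_max_right a b) hb⟩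
    calc sInf (f '' (A ∩ B)) ≤ f (max a b) := sInf_le ⟨max a b, hmem, rfl⟩
      _ = max (f a) (f b) := hf.map_max
      _ < c := max_lt hac hbc
  · exact max_le (sInf_le_sInf (Set.image_mono Set.inter_subset_left))
      (sInf_le_sInf (Set.image_mono Set.inter_subset_right))

theorem tendsto_mul_add_mul_nhds_zero_iff {ι : Type*} {l : Filter ι} {u v : ι → ℝ}
    (hu : ∀ i, 0 ≤ u i) (hv : ∀ i, 0 ≤ v i) {α β : ℝ} (hα : 0 < α) (hβ : 0 < β) :
    Tendsto (fun i => α * u i + β * v i) l (𝓝 0) ↔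
      Tendsto u l (𝓝 0) ∧ Tendsto v l (𝓝 0) := by
  refine ⟨fun h => ⟨?_, ?_⟩, fun ⟨hu', hv'⟩ => by
    simpa using (hu'.const_mul α).add (hv'.const_mul β)⟩
  · refine squeeze_zero hu (fun i => ?_) (by simpa using h.const_mul α⁻¹)
    rw [le_inv_mul_iff₀ hα]
    linarith [mul_nonneg hβ.le (hv i)]
  · refine squeeze_zero hv (fun i => ?_) (by simpa using h.const_mul β⁻¹)
    rw [le_inv_mul_iff₀ hβ]
    linarith [mul_nonneg hα.le (hu i)]

section TailMass

variable {W : ℕ → Type} [∀ n, Fintype (W n)]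

theorem tailMass_nonneg (p : ∀ n, W n → ℝ) (hp : ∀ n w, 0 ≤ p n w) (g : ∀ n, W n → ℝ)
    (a : ℝ) (n : ℕ) : 0 ≤ ∑ x : W n, if a < g n x then p n x else 0 :=
  Finset.sum_nonneg fun x _ => by split_ifs <;> simp [hp]

theorem tailMass_mix (pa pb : ∀ n, W n → ℝ) (α β : ℝ) (g : ∀ n, W n → ℝ) (a : ℝ) (n : ℕ) :
    (∑ x : W n, if a < g n x then α * pa n x + β * pb n x else 0) =
      α * (∑ x : W n, if a < g n x then pa n x else 0) +
        β * (∑ x : W n, if a < g n x then pb n x else 0) := by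
  simp only [← Finset.sum_filter, Finset.mul_sum, Finset.sum_add_distrib]

theorem isUpperSet_tendsto_tailMass (p : ∀ n, W n → ℝ) (hp : ∀ n w, 0 ≤ p n w)
    (g : ∀ n, W n → ℝ) :
    IsUpperSet {a : ℝ | Tendsto (fun n => ∑ x : W n, if a < g n x then p n x else 0)
      atTop (𝓝 0)} := by
  intro a b hab ha
  refine squeeze_zero (tailMass_nonneg p hp g b) (fun n => ?_) ha
  refine Finset.sum_le_sum fun x _ => ?_
  by_cases hb : b < g n x
  · simp [hb, hab.trans_lt hb]
  · split_ifs <;> simp [hp]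

end TailMass

theorem stmt_18_general {W : ℕ → Type} [∀ n, Fintype (W n)]
    (pa pb : ∀ n, W n → ℝ)
    (hpa0 : ∀ n w, 0 ≤ pa n w)
    (hpb0 : ∀ n w, 0 ≤ pb n w)
    (α β : ℝ) (hα : 0 < α) (hβ : 0 < β)
    (g : ∀ n, W n → ℝ) :
    pLimSupP (fun n w => α * pa n w + β * pb n w) g
      = max (pLimSupP pa g) (pLimSupP pb g) := by
  unfold pLimSupP
  have hmix : {a : ℝ | Tendsto (fun n => ∑ x : W n,
      if a < g n x then α * pa n x + β * pb n x else 0) atTop (𝓝 0)} =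
      {a : ℝ | Tendsto (fun n => ∑ x : W n, if a < g n x then pa n x else 0) atTop (𝓝 0)} ∩
      {a : ℝ | Tendsto (fun n => ∑ x : W n, if a < g n x then pb n x else 0) atTop (𝓝 0)} := by
    ext a
    simp only [Set.mem_ofPred_eq, Set.mem_inter_iff, tailMass_mix]
    exact tendsto_mul_add_mul_nhds_zero_iff (tailMass_nonneg pa hpa0 g a)
      (tailMass_nonneg pb hpb0 g a) hα hβ
  rw [hmix]
  exact sInf_image_inter_eq_max_of_isUpperSet EReal.coe_strictMono.monotone
    (isUpperSet_tendsto_tailMass pa hpa0 g) (isUpperSet_tendsto_tailMass pb hpb0 g)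

/-- for a mixed source `P_{W_n} = α P_{W_n^α} + β P_{W_n^β}` with
constant weights `α, β > 0`, `α + β = 1`,
`p-limsup g_n(W_n) = max{p-limsup g_n(W_n^α), p-limsup g_n(W_n^β)}`. -/
theorem stmt_18 {W : ℕ → Type} [∀ n, Fintype (W n)]
    (pa pb : ∀ n, W n → ℝ)
    (hpa0 : ∀ n w, 0 ≤ pa n w) (hpa1 : ∀ n, ∑ w, pa n w = 1)
    (hpb0 : ∀ n w, 0 ≤ pb n w) (hpb1 : ∀ n, ∑ w, pb n w = 1)
    (α β : ℝ) (hα : 0 < α) (hβ : 0 < β) (hαβ : α + β = 1)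
    (g : ∀ n, W n → ℝ) :
    pLimSupP (fun n w => α * pa n w + β * pb n w) g
      = max (pLimSupP pa g) (pLimSupP pb g) :=
  stmt_18_general pa pb hpa0 hpb0 α β hα hβ g
end
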